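/- Let X be a finite set with Nat.card X = p, and let νS be the Schröder norm on the Cartesian (1,2)-magma W X generated by X. Then for every n ≥ 1, the number of elements of norm n, namely Nat.card {w : W X // νS w = n}, equals the little p-Schröder number S p (n-1). -/

import Mathlib

/-!
Sorting the elements of norm `n + 2` by their outermost constructor: `un w` has norm `n + 2`
exactly when `w` has norm `n + 1`, and `bin w w'` exactly when the norms of `w` and `w'` are
`i + 1` and `j + 1` with `i + j = n`; the leaves are the elements of norm `1`. So the numbers of
elements of norm `m + 1` satisfy the recurrence of the little Schröder numbers, with initial
value `Nat.card X`.
-/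

universe u

/-- The Cartesian (1,2)-magma generated by `X`: planar unary–binary trees with leaves
labelled by `X`, with the unary map `un` and the binary map `bin`. -/
inductive W (X : Type u) : Type u
  | leaf : X → W X
  | un : W X → W X
  | bin : W X → W X → W X

/-- The Schröder norm on the Cartesian (1,2)-magma `W X`:
`νS (leaf x) = 1`, `νS (un w) = νS w + 1`, `νS (bin w w') = νS w + νS w'`. -/
def schroderNorm {X : Type u} : W X → ℕ
  | .leaf _ => 1
  | .un w => schroderNorm w + 1
  | .bin w w' => schroderNorm w + schroderNorm w'

open Finset

namespace W

variable {X : Type u}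

theorem schroderNorm_pos (w : W X) : 0 < schroderNorm w := by
  induction w <;> simp only [schroderNorm] <;> omega

theorem schroderNorm_eq_one_iff {w : W X} : schroderNorm w = 1 ↔ ∃ x, w = leaf x := by
  cases w with
  | leaf x => simp [schroderNorm]
  | un w => simp [schroderNorm, (schroderNorm_pos w).ne']
  | bin w w' =>
    have := schroderNorm_pos w
    have := schroderNorm_pos w'
    simp only [schroderNorm, reduceCtorEq, exists_false, iff_false]
    omega

noncomputable def leafEquiv : X ≃ {w : W X // schroderNorm w = 1} :=
  Equiv.ofBijective (fun x => ⟨leaf x, rfl⟩)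
    ⟨fun x y h => leaf.inj (congrArg Subtype.val h), fun ⟨w, hw⟩ => by
      obtain ⟨x, rfl⟩ := schroderNorm_eq_one_iff.1 hw
      exact ⟨x, rfl⟩⟩

def schroderNormAddTwoEquiv (n : ℕ) :
    {w : W X // schroderNorm w = n + 2} ≃
      {w : W X // schroderNorm w = n + 1} ⊕
        Σ ij : antidiagonal n,
          {w : W X // schroderNorm w = (ij : ℕ × ℕ).1 + 1} ×
            {w : W X // schroderNorm w = (ij : ℕ × ℕ).2 + 1} where
  toFun
    | ⟨leaf _, h⟩ => absurd h (by simp [schroderNorm])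
    | ⟨un w, h⟩ => .inl ⟨w, Nat.succ_injective h⟩
    | ⟨bin w w', h⟩ =>
      have := schroderNorm_pos w
      have := schroderNorm_pos w'
      have h : schroderNorm w + schroderNorm w' = n + 2 := h
      .inr ⟨⟨(schroderNorm w - 1, schroderNorm w' - 1), mem_antidiagonal.2 (by omega)⟩,
        ⟨w, by dsimp only; omega⟩, ⟨w', by dsimp only; omega⟩⟩
  invFun
    | .inl ⟨w, h⟩ => ⟨un w, congrArg (· + 1) h⟩
    | .inr ⟨ij, ⟨w, h⟩, ⟨w', h'⟩⟩ => ⟨bin w w', by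
        have := mem_antidiagonal.1 ij.2
        simp only [schroderNorm, h, h']
        omega⟩
  left_inv := by
    rintro ⟨⟨_⟩ | ⟨w⟩ | ⟨w, w'⟩, h⟩
    · exact absurd h (by simp [schroderNorm])
    all_goals rfl
  right_inv := by
    rintro (⟨w, h⟩ | ⟨⟨⟨i, j⟩, hij⟩, ⟨w, hw⟩, ⟨w', hw'⟩⟩)
    · rfl
    · dsimp only at hw hw'
      obtain rfl : i = schroderNorm w - 1 := by omega
      obtain rfl : j = schroderNorm w' - 1 := by omega
      rfl

instance finite_schroderNorm_eq [Finite X] (n : ℕ) : Finite {w : W X // schroderNorm w = n} := by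
  induction n using Nat.strong_induction_on with
  | _ n ih =>
    match n with
    | 0 =>
      have : IsEmpty {w : W X // schroderNorm w = 0} := ⟨fun w => (schroderNorm_pos w.1).ne' w.2⟩
      infer_instance
    | 1 => exact Finite.of_equiv X leafEquiv
    | n + 2 =>
      have := ih (n + 1) (by omega)
      have (ij : antidiagonal n) : Finite {w : W X // schroderNorm w = (ij : ℕ × ℕ).1 + 1} :=
        ih _ (by have := mem_antidiagonal.1 ij.2; omega)
      have (ij : antidiagonal n) : Finite {w : W X // schroderNorm w = (ij : ℕ × ℕ).2 + 1} :=
        ih _ (by have := mem_antidiagonal.1 ij.2; omega)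
      exact Finite.of_equiv _ (schroderNormAddTwoEquiv n).symm

theorem card_schroderNorm_eq_add_two [Finite X] (n : ℕ) :
    Nat.card {w : W X // schroderNorm w = n + 2} =
      Nat.card {w : W X // schroderNorm w = n + 1} +
        ∑ ij ∈ antidiagonal n, Nat.card {w : W X // schroderNorm w = ij.1 + 1} *
          Nat.card {w : W X // schroderNorm w = ij.2 + 1} := by
  rw [Nat.card_congr (schroderNormAddTwoEquiv n), Nat.card_sum, Nat.card_sigma,
    ← sum_coe_sort (antidiagonal n)]
  simp only [Nat.card_prod]

end W

/-- On the Cartesian (1,2)-magma `W X` generated by a finite set `X`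
with `Nat.card X = p`, equipped with the Schröder norm, the number of elements of norm
`n ≥ 1` is the little `p`-Schröder number `S p (n-1)`, where the little `p`-Schröder
numbers are defined by `S p 0 = p` and
`S p n = S p (n-1) + ∑_{k=0}^{n-1} S p k · S p (n-1-k)` for `n ≥ 1`. -/
theorem stmt16 {X : Type u} [Finite X] (p : ℕ) (hX : Nat.card X = p)
    (S : ℕ → ℕ) (hS0 : S 0 = p)
    (hS : ∀ m : ℕ, S (m + 1) = S m + ∑ k ∈ Finset.range (m + 1), S k * S (m - k))
    (n : ℕ) (hn : 1 ≤ n) :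
    Nat.card {w : W X // schroderNorm w = n} = S (n - 1) := by
  have card_eq (m : ℕ) : Nat.card {w : W X // schroderNorm w = m + 1} = S m := by
    induction m using Nat.strong_induction_on with
    | _ m ih =>
      cases m with
      | zero => rw [← Nat.card_congr W.leafEquiv, hX, hS0]
      | succ m =>
        rw [W.card_schroderNorm_eq_add_two, hS, ih m m.lt_succ_self,
          ← Nat.sum_antidiagonal_eq_sum_range_succ (fun i j => S i * S j)]
        refine congrArg _ (sum_congr rfl fun ij hij => ?_)
        have := mem_antidiagonal.1 hij
        rw [ih ij.1 (by omega), ih ij.2 (by omega)]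
  obtain ⟨m, rfl⟩ := Nat.exists_eq_add_of_le' hn
  exact card_eq m
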